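/- Let w be an infinite binary recurrent word in which every factor has at most three abelian returns. Then each letter of w appears in blocks of at most three distinct lengths; that is, for each letter a, the set of integers k such that b a^k c is a factor of w for letters b ≠ a, c ≠ a has cardinality at most 3. -/

import Mathlib

/-- The factor of length `n` of the infinite word `w` starting at position `i`. -/
def wordAt {α : Type*} (w : ℕ → α) (i n : ℕ) : List α :=
  (List.range n).map (fun k => w (i + k))

/-- `u` is a factor of the infinite word `w`. -/
def IsFactorW {α : Type*} (w : ℕ → α) (u : List α) : Prop :=
  ∃ i, u = wordAt w i u.length

/-- `w` is recurrent: every factor occurs infinitely often. -/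
def RecurrentW {α : Type*} (w : ℕ → α) : Prop :=
  ∀ u, IsFactorW w u → ∀ N, ∃ i, N ≤ i ∧ u = wordAt w i u.length

/-- `w` is (purely) periodic. -/
def PeriodicW {α : Type*} (w : ℕ → α) : Prop :=
  ∃ T, 0 < T ∧ ∀ n, w (n + T) = w n

/-- `w` is ultimately periodic. -/
def UltPeriodicW {α : Type*} (w : ℕ → α) : Prop :=
  ∃ T, 0 < T ∧ ∃ n₀, ∀ n, n₀ ≤ n → w (n + T) = w n

/-- Two finite words are abelian equivalent: same number of occurrences of each letter. -/
def AbEquiv {α : Type*} [DecidableEq α] (u v : List α) : Prop :=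
  ∀ a : α, u.count a = v.count a

/-- Positions of occurrences of words abelian equivalent to `u` in `w`. -/
def abOcc {α : Type*} [DecidableEq α] (w : ℕ → α) (u : List α) : Set ℕ :=
  {i | AbEquiv (wordAt w i u.length) u}

/-- The semi-abelian returns to (the abelian class of) `u` in `w`: words extending from one
occurrence of the abelian class of `u` to the next one. -/
def semiAbReturns {α : Type*} [DecidableEq α] (w : ℕ → α) (u : List α) : Set (List α) :=
  {r | ∃ i j, i ∈ abOcc w u ∧ j ∈ abOcc w u ∧ i < j ∧
      (∀ k, i < k → k < j → k ∉ abOcc w u) ∧ r = wordAt w i (j - i)}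

/-- Positions of (exact) occurrences of `u` in `w`. -/
def occW {α : Type*} [DecidableEq α] (w : ℕ → α) (u : List α) : Set ℕ :=
  {i | u = wordAt w i u.length}

/-- The ordinary return words of `u` in `w`. -/
def returnWords {α : Type*} [DecidableEq α] (w : ℕ → α) (u : List α) : Set (List α) :=
  {r | ∃ i j, i ∈ occW w u ∧ j ∈ occW w u ∧ i < j ∧
      (∀ k, i < k → k < j → k ∉ occW w u) ∧ r = wordAt w i (j - i)}

/-- `u` has exactly `k` semi-abelian returns in `w`. -/
def ExactlyKSemiAbReturns {α : Type*} [DecidableEq α] (w : ℕ → α) (u : List α) (k : ℕ) : Prop :=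
  ∃ f : Fin k → List α, Function.Injective f ∧ semiAbReturns w u = Set.range f

/-- `u` has exactly `k` abelian returns in `w`: there are `k` pairwise non-abelian-equivalent
representatives so that every semi-abelian return is abelian equivalent to exactly one of them,
and each representative is realized. -/
def ExactlyKAbReturns {α : Type*} [DecidableEq α] (w : ℕ → α) (u : List α) (k : ℕ) : Prop :=
  ∃ f : Fin k → List α,
    (∀ i j, AbEquiv (f i) (f j) → i = j) ∧
    (∀ r ∈ semiAbReturns w u, ∃ i, AbEquiv r (f i)) ∧
    (∀ i, ∃ r ∈ semiAbReturns w u, AbEquiv r (f i))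

/-- `u` has at most `k` abelian returns in `w`. -/
def AtMostKAbReturns {α : Type*} [DecidableEq α] (w : ℕ → α) (u : List α) (k : ℕ) : Prop :=
  ∃ f : Fin k → List α, ∀ r ∈ semiAbReturns w u, ∃ i, AbEquiv r (f i)

/-- `u` has at least `k` abelian returns in `w`. -/
def AtLeastKAbReturns {α : Type*} [DecidableEq α] (w : ℕ → α) (u : List α) (k : ℕ) : Prop :=
  ∃ f : Fin k → List α,
    (∀ i j, AbEquiv (f i) (f j) → i = j) ∧
    (∀ i, ∃ r ∈ semiAbReturns w u, AbEquiv r (f i))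

/-- `u` has at least two semi-abelian returns in `w`. -/
def AtLeastTwoSemiAbReturns {α : Type*} [DecidableEq α] (w : ℕ → α) (u : List α) : Prop :=
  ∃ r₁ r₂, r₁ ∈ semiAbReturns w u ∧ r₂ ∈ semiAbReturns w u ∧ r₁ ≠ r₂

/-- The factor complexity of `w`. -/
noncomputable def complexityW {α : Type*} (w : ℕ → α) (n : ℕ) : ℕ :=
  {u : List α | u.length = n ∧ IsFactorW w u}.ncard

/-- A Sturmian word: aperiodic binary word with factor complexity `n + 1`. -/
def SturmianW (w : ℕ → Bool) : Prop :=
  ¬ UltPeriodicW w ∧ ∀ n, complexityW w n = n + 1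

/-- Right special factor of a binary word. -/
def RightSpecial (w : ℕ → Bool) (B : List Bool) : Prop :=
  IsFactorW w (B ++ [false]) ∧ IsFactorW w (B ++ [true])

/-- Left special factor of a binary word. -/
def LeftSpecial (w : ℕ → Bool) (B : List Bool) : Prop :=
  IsFactorW w (false :: B) ∧ IsFactorW w (true :: B)

/-- Bispecial factor of a binary word. -/
def Bispecial (w : ℕ → Bool) (B : List Bool) : Prop :=
  RightSpecial w B ∧ LeftSpecial w B

/-- `w` is `c`-balanced. -/
def CBalanced {α : Type*} [DecidableEq α] (w : ℕ → α) (c : ℕ) : Prop :=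
  ∀ u v : List α, IsFactorW w u → IsFactorW w v → u.length = v.length →
    ∀ a : α, |((u.count a : ℤ) - (v.count a : ℤ))| ≤ (c : ℤ)

/-! In a binary word every block `b a^k c` with `b, c ≠ a` is `b a^k b`, and `b a^k` is a
semi-abelian return to the one-letter word `[b]` containing exactly `k` letters `a`. Abelian
equivalent words have equally many `a`'s, so three abelian returns to `[b]` allow at most three
block lengths. -/

section Words

variable {α : Type*}

lemma wordAt_one (w : ℕ → α) (i : ℕ) : wordAt w i 1 = [w i] := by
  simp [wordAt]

lemma wordAt_add (w : ℕ → α) (i m n : ℕ) :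
    wordAt w i (m + n) = wordAt w i m ++ wordAt w (i + m) n := by
  simp only [wordAt, List.range_add, List.map_append, List.map_map, Function.comp_def, add_assoc]

lemma mem_wordAt {w : ℕ → α} {i n : ℕ} {x : α} :
    x ∈ wordAt w i n ↔ ∃ t < n, w (i + t) = x := by
  simp [wordAt]

lemma isFactorW_singleton {w : ℕ → α} {x : α} : IsFactorW w [x] ↔ ∃ i, w i = x := by
  simp [IsFactorW, wordAt_one, eq_comm]

lemma exists_of_isFactorW_block {w : ℕ → α} {a b c : α} {k : ℕ}
    (hblock : IsFactorW w ([b] ++ List.replicate k a ++ [c])) :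
    ∃ i, w i = b ∧ wordAt w (i + 1) k = List.replicate k a ∧ w (i + 1 + k) = c := by
  obtain ⟨i, hi⟩ := hblock
  have hlen : ([b] ++ List.replicate k a ++ [c]).length = 1 + k + 1 := by simp; omega
  rw [hlen, wordAt_add, wordAt_add, wordAt_one, wordAt_one] at hi
  obtain ⟨hbk, hc⟩ := List.append_inj' hi rfl
  obtain ⟨hb, hk⟩ := List.append_inj hbk (by simp)
  exact ⟨i, by simpa [eq_comm] using hb, hk.symm, by simpa [eq_comm, add_assoc] using hc⟩

variable [DecidableEq α]

lemma mem_abOcc_singleton {w : ℕ → α} {x : α} {i : ℕ} : i ∈ abOcc w [x] ↔ w i = x := by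
  simp only [abOcc, AbEquiv, Set.mem_ofPred_eq, List.length_singleton, wordAt_one,
    List.count_singleton']
  refine ⟨fun h => by simpa using h x, fun h _ => by rw [h]⟩

lemma wordAt_mem_semiAbReturns_singleton {w : ℕ → α} {b : α} {i n : ℕ} (hi : w i = b)
    (hj : w (i + 1 + n) = b) (hmid : b ∉ wordAt w (i + 1) n) :
    wordAt w i (n + 1) ∈ semiAbReturns w [b] := by
  refine ⟨i, i + 1 + n, mem_abOcc_singleton.2 hi, mem_abOcc_singleton.2 hj, by omega,
    fun m him hmj hm => hmid (mem_wordAt.2 ⟨m - (i + 1), by omega, ?_⟩), by congr 1; omega⟩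
  rw [← mem_abOcc_singleton.1 hm]
  congr 1
  omega

lemma exists_mem_semiAbReturns_count_eq_of_block {w : ℕ → α} {a b : α} {k : ℕ} (hab : b ≠ a)
    (hblock : IsFactorW w ([b] ++ List.replicate k a ++ [b])) :
    ∃ r ∈ semiAbReturns w [b], r.count a = k := by
  obtain ⟨i, hi, hmid, hj⟩ := exists_of_isFactorW_block hblock
  refine ⟨wordAt w i (1 + k), ?_, ?_⟩
  · rw [add_comm]
    exact wordAt_mem_semiAbReturns_singleton hi hj (by simp [hmid, hab])
  · simp [wordAt_add, wordAt_one, hmid, hi, hab]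

lemma AtMostKAbReturns.exists_count_eq {w : ℕ → α} {u : List α} {n : ℕ}
    (h : AtMostKAbReturns w u n) (a : α) :
    ∃ c : Fin n → ℕ, ∀ r ∈ semiAbReturns w u, ∃ j, r.count a = c j :=
  let ⟨f, hf⟩ := h
  ⟨fun j => (f j).count a, fun r hr => (hf r hr).imp fun _ hj => hj a⟩

end Words

theorem stmt19_general (w : ℕ → Bool)
    (h : ∀ u, IsFactorW w u → u ≠ [] → AtMostKAbReturns w u 3) :
    ∀ a : Bool, ∃ k₁ k₂ k₃ : ℕ, ∀ k, 0 < k →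
      (∃ b c : Bool, b ≠ a ∧ c ≠ a ∧
        IsFactorW w ([b] ++ List.replicate k a ++ [c])) →
      k = k₁ ∨ k = k₂ ∨ k = k₃ := by
  intro a
  have toBlock {k : ℕ} : (∃ b c : Bool, b ≠ a ∧ c ≠ a ∧
      IsFactorW w ([b] ++ List.replicate k a ++ [c])) →
      IsFactorW w ([!a] ++ List.replicate k a ++ [!a]) := by
    rintro ⟨b, c, hb, hc, hblock⟩
    rwa [Bool.eq_not.2 hb, Bool.eq_not.2 hc] at hblock
  by_cases hfac : IsFactorW w [!a]
  · obtain ⟨c, hc⟩ := (h [!a] hfac (List.cons_ne_nil _ _)).exists_count_eq a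
    refine ⟨c 0, c 1, c 2, fun k _ hblock => ?_⟩
    obtain ⟨r, hr, rfl⟩ :=
      exists_mem_semiAbReturns_count_eq_of_block (by simp) (toBlock hblock)
    obtain ⟨j, hj⟩ := hc r hr
    fin_cases j <;> simp [hj]
  · refine ⟨0, 0, 0, fun k _ hblock => absurd ?_ hfac⟩
    obtain ⟨i, hi, -⟩ := exists_of_isFactorW_block (toBlock hblock)
    exact isFactorW_singleton.2 ⟨i, hi⟩

/-- In a recurrent binary word all of whose factors have at most three abelian returns,
each letter appears in blocks of at most three distinct lengths. -/
theorem stmt19 (w : ℕ → Bool) (hrec : RecurrentW w)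
    (h : ∀ u, IsFactorW w u → u ≠ [] → AtMostKAbReturns w u 3) :
    ∀ a : Bool, ∃ k₁ k₂ k₃ : ℕ, ∀ k, 0 < k →
      (∃ b c : Bool, b ≠ a ∧ c ≠ a ∧
        IsFactorW w ([b] ++ List.replicate k a ++ [c])) →
      k = k₁ ∨ k = k₂ ∨ k = k₃ :=
  stmt19_general w h
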